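/- The infinite series ∑_{k=2}^{∞} 2/(k(k+1)-2) converges and equals 11/9; consequently Pr_∞(2) := (1/3) · ∑_{k=2}^{∞} 2/(k(k+1)-2) = 11/27. -/
import Mathlib

lemma partial_sum_eq (n : ℕ) :
    ∑ m ∈ Finset.range n, (2 : ℝ) / (((m : ℝ) + 2) * ((m : ℝ) + 3) - 2) =
      11 / 9 - (2 / 3) * (1 / ((n : ℝ) + 1) + 1 / ((n : ℝ) + 2) + 1 / ((n : ℝ) + 3)) := by
  induction n with
  | zero => norm_num
  | succ n ih =>
    rw [Finset.sum_range_succ, ih]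
    push_cast
    have h1 : (n : ℝ) + 1 ≠ 0 := by positivity
    have h2 : (n : ℝ) + 2 ≠ 0 := by positivity
    have h3 : (n : ℝ) + 3 ≠ 0 := by positivity
    have h4 : (n : ℝ) + 4 ≠ 0 := by positivity
    have h5 : ((n : ℝ) + 2) * ((n : ℝ) + 3) - 2 = ((n : ℝ) + 1) * ((n : ℝ) + 4) := by ring
    rw [h5]
    field_simp
    ring

lemma hasSum_part :
    HasSum (fun m : ℕ => (2 : ℝ) / (((m : ℝ) + 2) * ((m : ℝ) + 3) - 2)) (11 / 9) := by
  have hnonneg : ∀ m : ℕ, 0 ≤ (2 : ℝ) / (((m : ℝ) + 2) * ((m : ℝ) + 3) - 2) := by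
    intro m
    have : (0:ℝ) < ((m : ℝ) + 2) * ((m : ℝ) + 3) - 2 := by nlinarith [Nat.cast_nonneg (α := ℝ) m]
    positivity
  rw [hasSum_iff_tendsto_nat_of_nonneg hnonneg]
  have h0 : Filter.Tendsto (fun n : ℕ => 1 / ((n : ℝ) + 1)) Filter.atTop (nhds 0) :=
    tendsto_one_div_add_atTop_nhds_zero_nat
  have hshift : ∀ c : ℝ, Filter.Tendsto (fun n : ℕ => 1 / ((n : ℝ) + c)) Filter.atTop (nhds 0) := by
    intro c
    simp only [one_div]
    apply Filter.Tendsto.comp tendsto_inv_atTop_zero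
    apply Filter.tendsto_atTop_add_const_right
    exact tendsto_natCast_atTop_atTop
  have := ((hshift 1).add (hshift 2)).add (hshift 3)
  simp only [one_div] at this ⊢
  have h := (tendsto_const_nhds (x := (11/9 : ℝ)) (f := Filter.atTop)).sub
    (this.const_mul (2/3 : ℝ))
  simp only [add_zero, mul_zero, sub_zero] at h
  convert h using 2 with n
  rw [partial_sum_eq n]
  simp [one_div]

/-- The infinite series `∑_{k=2}^{∞} 2/(k(k+1)-2)` converges and equals `11/9`
(the summand is indexed by `k = m + 2`, `m : ℕ`); consequently
`Pr_∞(2) = (1/3) · ∑_{k=2}^{∞} 2/(k(k+1)-2) = 11/27`. -/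
theorem prob_two_jumps_infinite_limit :
    HasSum (fun m : ℕ => (2 : ℝ) / (((m : ℝ) + 2) * ((m : ℝ) + 3) - 2)) (11 / 9) ∧
    (1 / 3 : ℝ) * ∑' m : ℕ, (2 : ℝ) / (((m : ℝ) + 2) * ((m : ℝ) + 3) - 2) = 11 / 27 := by
  refine ⟨hasSum_part, ?_⟩
  rw [hasSum_part.tsum_eq]
  norm_num
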